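/- arXiv:1608.02876 — 2 statements merged into one kernel-verified Lean document; each statement's English description precedes it below -/
import Mathlib

section
/- Let K^W_*(F) = K^{MW}_*(F)/(h) denote Witt K-theory of a real closed field F, which is isomorphic to Z[η, [-1]]/(2 + [-1]η). Then localizing at [-1] gives an isomorphism [-1]^{-1} K^{MW}_*(F) ≅ Z[[-1], [-1]^{-1}], the Laurent polynomial ring over Z in the degree-1 variable [-1]. -/
/-- Generators of Milnor–Witt K-theory: a symbol `[u]` for each unit `u ∈ Fˣ`
(`Sum.inl u`) and the element `η` (`Sum.inr ()`). -/
inductive MWRel (F : Type) [Field F] :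
    FreeAlgebra ℤ (Fˣ ⊕ Unit) → FreeAlgebra ℤ (Fˣ ⊕ Unit) → Prop
  | twistedLog (u v : Fˣ) :
      MWRel F (FreeAlgebra.ι ℤ (Sum.inl (u * v)))
        (FreeAlgebra.ι ℤ (Sum.inl u) + FreeAlgebra.ι ℤ (Sum.inl v) +
          FreeAlgebra.ι ℤ (Sum.inr ()) * FreeAlgebra.ι ℤ (Sum.inl u) *
            FreeAlgebra.ι ℤ (Sum.inl v))
  | steinberg (u v : Fˣ) (h : (u : F) + (v : F) = 1) :
      MWRel F (FreeAlgebra.ι ℤ (Sum.inl u) * FreeAlgebra.ι ℤ (Sum.inl v)) 0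
  | etaComm (u : Fˣ) :
      MWRel F (FreeAlgebra.ι ℤ (Sum.inl u) * FreeAlgebra.ι ℤ (Sum.inr ()))
        (FreeAlgebra.ι ℤ (Sum.inr ()) * FreeAlgebra.ι ℤ (Sum.inl u))
  | witt :
      MWRel F ((2 + FreeAlgebra.ι ℤ (Sum.inl (-1 : Fˣ)) * FreeAlgebra.ι ℤ (Sum.inr ())) *
        FreeAlgebra.ι ℤ (Sum.inr ())) 0

/-- The Milnor–Witt K-theory ring `K^{MW}_*(F)` (underlying ungraded ring). -/
def MW (F : Type) [Field F] : Type := RingQuot (MWRel F)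

noncomputable instance (F : Type) [Field F] : Ring (MW F) :=
  inferInstanceAs (Ring (RingQuot (MWRel F)))

/-- The symbol `[u]` in Milnor–Witt K-theory. -/
noncomputable def MWsym (F : Type) [Field F] (u : Fˣ) : MW F :=
  RingQuot.mkRingHom (MWRel F) (FreeAlgebra.ι ℤ (Sum.inl u))

/-- The element `η` in Milnor–Witt K-theory. -/
noncomputable def MWeta (F : Type) [Field F] : MW F :=
  RingQuot.mkRingHom (MWRel F) (FreeAlgebra.ι ℤ (Sum.inr ()))

/-!
The map `MW.signature` sends `[u]` to `0` or `T` according to the sign of `u`, and `η` to `-2T⁻¹`;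
on `⟨u⟩ = 1 + η[u]` it is the sign of `u`, i.e. the signature of quadratic forms. It is universal
among maps inverting `[-1]` because of two identities valid in `K^{MW}_*(F)` over any field of
characteristic not two: `[-1][c⁴] = 0` (as `η[c²] = 0` and `2[-1] = -η[-1]²`), and
`[-1][-x] = [-1]²` whenever `[-1][x] = 0`. Over a real closed field every positive element is a
fourth power, so once `[-1]` is a unit each `[u]` becomes `0` or `[-1]`, and `(2 + η[-1])[-1] = [1] = 0`
forces `η = -2[-1]⁻¹`.
-/

open LaurentPolynomial

namespace MW

variable {F R : Type} [Field F] [Ring R]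

noncomputable def lift (A : Fˣ → R) (E : R)
    (hlog : ∀ u v, A (u * v) = A u + A v + E * A u * A v)
    (hsteinberg : ∀ u v : Fˣ, (u : F) + v = 1 → A u * A v = 0)
    (hcomm : ∀ u, Commute (A u) E) (hwitt : (2 + A (-1) * E) * E = 0) : MW F →+* R :=
  RingQuot.lift ⟨(FreeAlgebra.lift ℤ (Sum.elim A fun _ ↦ E)).toRingHom, by
    intro x y h
    induction h with
    | twistedLog u v => simpa using hlog u v
    | steinberg u v h => simpa using hsteinberg u v h
    | etaComm u => simpa using (hcomm u).eq
    | witt => simpa [map_ofNat] using hwitt⟩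

variable {A : Fˣ → R} {E : R} {hlog : ∀ u v, A (u * v) = A u + A v + E * A u * A v}
  {hsteinberg : ∀ u v : Fˣ, (u : F) + v = 1 → A u * A v = 0}
  {hcomm : ∀ u, Commute (A u) E} {hwitt : (2 + A (-1) * E) * E = 0}

@[simp]
theorem lift_MWsym (u : Fˣ) : lift A E hlog hsteinberg hcomm hwitt (MWsym F u) = A u :=
  (RingQuot.lift_mkRingHom_apply _ _ _).trans (by simp)

@[simp]
theorem lift_MWeta : lift A E hlog hsteinberg hcomm hwitt (MWeta F) = E :=
  (RingQuot.lift_mkRingHom_apply _ _ _).trans (by simp)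

theorem ringHom_ext {f g : MW F →+* R} (hsym : ∀ u, f (MWsym F u) = g (MWsym F u))
    (heta : f (MWeta F) = g (MWeta F)) : f = g :=
  RingQuot.ringQuot_ext f g <| congrArg AlgHom.toRingHom <|
    (FreeAlgebra.hom_ext (R := ℤ) (f := (f.comp _).toIntAlgHom) (g := (g.comp _).toIntAlgHom) <|
      funext fun | .inl u => hsym u | .inr () => heta)

end MW

section Identities

variable {F : Type} [Field F]

local notation "η" => MWeta F

theorem MWsym_mul (u v : Fˣ) :
    MWsym F (u * v) = MWsym F u + MWsym F v + η * MWsym F u * MWsym F v := by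
  have h := RingQuot.mkRingHom_rel (MWRel.twistedLog (F := F) u v)
  simp only [map_add, map_mul] at h
  exact h

theorem MWsym_mul_MWsym_of_add_eq_one {u v : Fˣ} (h : (u : F) + v = 1) :
    MWsym F u * MWsym F v = 0 := by
  have h := RingQuot.mkRingHom_rel (MWRel.steinberg u v h)
  simp only [map_mul, map_zero] at h
  exact h

theorem commute_MWsym_MWeta (u : Fˣ) : Commute (MWsym F u) η := by
  have h := RingQuot.mkRingHom_rel (MWRel.etaComm (F := F) u)
  simp only [map_mul] at h
  exact h

theorem hyperbolic_mul_MWeta : (2 + MWsym F (-1) * η) * η = 0 := by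
  have h := RingQuot.mkRingHom_rel (MWRel.witt (F := F))
  simp only [map_add, map_mul, map_ofNat, map_zero] at h
  exact h

/-- The class `⟨u⟩` of the rank-one form. -/
noncomputable def MWform (F : Type) [Field F] (u : Fˣ) : MW F := 1 + MWeta F * MWsym F u

theorem MWsym_mul_eq_add_MWform_mul (u v : Fˣ) :
    MWsym F (u * v) = MWsym F u + MWform F u * MWsym F v := by
  rw [MWsym_mul, MWform]; noncomm_ring

theorem MWsym_mul_MWform_of_mul_eq_zero {u v : Fˣ} (h : MWsym F u * MWsym F v = 0) :
    MWsym F u * MWform F v = MWsym F u := by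
  rw [MWform, mul_add, mul_one, ← mul_assoc, (commute_MWsym_MWeta u).eq, mul_assoc, h, mul_zero,
    add_zero]

theorem MWsym_one [NeZero (2 : F)] : MWsym F 1 = 0 := by
  have key : ∀ u : Fˣ, MWsym F 1 = -(η * MWsym F u * MWsym F 1) := fun u ↦
    eq_neg_of_add_eq_zero_left (add_left_cancel (a := MWsym F u) (by
      rw [← add_assoc, ← MWsym_mul, mul_one, add_zero]))
  set two : Fˣ := Units.mk0 2 two_ne_zero
  have hst : MWsym F two * MWsym F (-1) = 0 :=
    MWsym_mul_MWsym_of_add_eq_one (by norm_num [two])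
  calc MWsym F 1 = -(η * MWsym F two * MWsym F 1) := key two
    _ = -(η * MWsym F two * -(η * MWsym F (-1) * MWsym F 1)) := by rw [← key (-1)]
    _ = η * (MWsym F two * η) * MWsym F (-1) * MWsym F 1 := by noncomm_ring
    _ = η * η * (MWsym F two * MWsym F (-1)) * MWsym F 1 := by
      rw [(commute_MWsym_MWeta two).eq]; noncomm_ring
    _ = 0 := by rw [hst]; noncomm_ring

theorem MWform_mul_MWsym_inv [NeZero (2 : F)] (u : Fˣ) :
    MWform F u * MWsym F u⁻¹ = -MWsym F u := by
  have h := MWsym_mul_eq_add_MWform_mul u u⁻¹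
  rw [mul_inv_cancel, MWsym_one] at h
  exact eq_neg_of_add_eq_zero_right h.symm

theorem MWsym_mul_eq_zero_of_MWsym_inv_mul_eq_zero [NeZero (2 : F)] {u : Fˣ} {x : MW F}
    (h : MWsym F u⁻¹ * x = 0) : MWsym F u * x = 0 := by
  rw [← neg_eq_zero, ← neg_mul, ← MWform_mul_MWsym_inv, mul_assoc, h, mul_zero]

theorem MWsym_mul_MWsym_inv_of_mul_eq_zero [NeZero (2 : F)] {u v : Fˣ}
    (h : MWsym F u * MWsym F v = 0) : MWsym F u * MWsym F v⁻¹ = 0 := by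
  rw [← MWsym_mul_MWform_of_mul_eq_zero h, mul_assoc, MWform_mul_MWsym_inv, mul_neg, h, neg_zero]

theorem MWsym_mul_MWsym_neg [NeZero (2 : F)] (u : Fˣ) : MWsym F u * MWsym F (-u) = 0 := by
  by_cases hu : (u : F) = 1
  · rw [Units.val_eq_one.mp hu, MWsym_one, zero_mul]
  -- `-u = (1 - u) / (1 - u⁻¹)`, and `[u]` is killed by `[1 - u]` and by `[1 - u⁻¹]`
  set v : Fˣ := Units.mk0 (1 - u) (sub_ne_zero.mpr (Ne.symm hu))
  set w : Fˣ := Units.mk0 (1 - (u : F)⁻¹) (sub_ne_zero.mpr (by simpa [eq_comm] using hu))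
  have hv : MWsym F u * MWsym F v = 0 := MWsym_mul_MWsym_of_add_eq_one (by simp [v])
  have hw : MWsym F u * MWsym F w = 0 :=
    MWsym_mul_eq_zero_of_MWsym_inv_mul_eq_zero (MWsym_mul_MWsym_of_add_eq_one (by simp [w]))
  have huvw : -u = v * w⁻¹ := by
    ext
    simp only [v, w, Units.val_neg, Units.val_mul, Units.val_inv_eq_inv_val, Units.val_mk0]
    field_simp
    ring
  rw [huvw, MWsym_mul_eq_add_MWform_mul, mul_add, ← mul_assoc, MWsym_mul_MWform_of_mul_eq_zero hv,
    hv, MWsym_mul_MWsym_inv_of_mul_eq_zero hw, add_zero]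

theorem MWeta_mul_MWeta_mul_MWsym_neg_one : η * η * MWsym F (-1) = -(2 * η) := by
  have hcomm : MWsym F (-1) * (η * η) = η * η * MWsym F (-1) :=
    ((commute_MWsym_MWeta _).mul_right (commute_MWsym_MWeta _)).eq
  rw [← hcomm, ← add_zero (-(2 * η)), ← hyperbolic_mul_MWeta]
  noncomm_ring

theorem MWeta_mul_MWform_neg_one : η * MWform F (-1) = -η := by
  rw [MWform, mul_add, ← mul_assoc, MWeta_mul_MWeta_mul_MWsym_neg_one]
  noncomm_ring

theorem hyperbolic_mul_MWsym_neg_one [NeZero (2 : F)] :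
    (2 + MWsym F (-1) * η) * MWsym F (-1) = 0 := by
  have h := MWsym_mul (F := F) (-1) (-1)
  rw [neg_one_mul, neg_neg, MWsym_one] at h
  rw [add_mul, (commute_MWsym_MWeta _).eq]
  calc 2 * MWsym F (-1) + η * MWsym F (-1) * MWsym F (-1)
      = MWsym F (-1) + MWsym F (-1) + η * MWsym F (-1) * MWsym F (-1) := by noncomm_ring
    _ = 0 := h.symm

theorem MWeta_mul_MWsym_mul_self [NeZero (2 : F)] (c : Fˣ) : η * MWsym F (c * c) = 0 := by
  have hflip : η * MWsym F c = η * MWsym F (-1) - η * MWsym F (-c) := by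
    have h : MWsym F c = MWsym F (-1) + MWform F (-1) * MWsym F (-c) := by
      rw [← MWsym_mul_eq_add_MWform_mul, neg_one_mul, neg_neg]
    rw [h, mul_add, ← mul_assoc, MWeta_mul_MWform_neg_one, neg_mul, sub_eq_add_neg]
  have hneg : MWsym F (-c) * MWsym F c = 0 := by simpa using MWsym_mul_MWsym_neg (-c)
  calc η * MWsym F (c * c) = 2 * (η * MWsym F c) + η * (η * MWsym F c) * MWsym F c := by
        rw [MWsym_mul]; noncomm_ring
    _ = 2 * (η * MWsym F c) + η * η * MWsym F (-1) * MWsym F c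
          - η * η * (MWsym F (-c) * MWsym F c) := by rw [hflip]; noncomm_ring
    _ = 0 := by rw [MWeta_mul_MWeta_mul_MWsym_neg_one, hneg]; noncomm_ring

theorem MWsym_neg_one_mul_MWsym_mul_self_of_MWeta_mul [NeZero (2 : F)] {b : Fˣ}
    (hb : η * MWsym F b = 0) : MWsym F (-1) * MWsym F (b * b) = 0 :=
  calc MWsym F (-1) * MWsym F (b * b)
      = (2 + MWsym F (-1) * η) * MWsym F (-1) * MWsym F b
          - MWsym F (-1) * (η * MWsym F (-1)) * MWsym F b
          + MWsym F (-1) * (η * MWsym F b) * MWsym F b := by rw [MWsym_mul]; noncomm_ring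
    _ = 0 := by
      rw [hyperbolic_mul_MWsym_neg_one, ← (commute_MWsym_MWeta _).eq]
      simp only [mul_assoc, hb, zero_mul, mul_zero, sub_zero, add_zero]

theorem MWsym_neg_one_mul_MWsym_fourth_power [NeZero (2 : F)] (c : Fˣ) :
    MWsym F (-1) * MWsym F (c * c * (c * c)) = 0 :=
  MWsym_neg_one_mul_MWsym_mul_self_of_MWeta_mul (MWeta_mul_MWsym_mul_self c)

theorem MWsym_neg_one_mul_MWsym_neg_of_mul_eq_zero {x : Fˣ}
    (h : MWsym F (-1) * MWsym F x = 0) :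
    MWsym F (-1) * MWsym F (-x) = MWsym F (-1) * MWsym F (-1) := by
  have hcomm : Commute (MWsym F (-1)) (MWform F (-1)) :=
    (Commute.one_right _).add_right ((commute_MWsym_MWeta _).mul_right (Commute.refl _))
  rw [← neg_one_mul x, MWsym_mul_eq_add_MWform_mul, mul_add, ← mul_assoc, hcomm.eq, mul_assoc, h,
    mul_zero, add_zero]

theorem map_MWeta_of_map_MWsym_neg_one [NeZero (2 : F)] {S : Type} [Ring S]
    (g : MW F →+* S) {a : Sˣ} (ha : g (MWsym F (-1)) = a) : g (MWeta F) = -2 * ↑a⁻¹ := by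
  have h := congrArg g (hyperbolic_mul_MWsym_neg_one (F := F))
  rw [map_mul, map_add, map_mul, map_ofNat, ha, map_zero, Units.mul_left_eq_zero] at h
  calc g (MWeta F) = ↑a⁻¹ * (2 + ↑a * g (MWeta F)) - ↑a⁻¹ * 2 := by
        rw [mul_add, ← mul_assoc, Units.inv_mul, one_mul, add_sub_cancel_left]
    _ = -2 * ↑a⁻¹ := by rw [h]; noncomm_ring

end Identities

section Ordered

variable {F : Type} [Field F] [LinearOrder F] [IsStrictOrderedRing F]

theorem exists_pos_mul_self_eq (hsq : ∀ a : F, 0 ≤ a → ∃ b : F, b ^ 2 = a) {u : Fˣ}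
    (hu : 0 < (u : F)) : ∃ b : Fˣ, 0 < (b : F) ∧ b * b = u := by
  obtain ⟨b, hb⟩ := hsq u hu.le
  have hb0 : 0 < |b| := abs_pos.mpr (by rintro rfl; simp [hu.ne] at hb)
  exact ⟨Units.mk0 |b| hb0.ne', hb0, Units.ext (by simp [← sq, hb])⟩

theorem MWsym_neg_one_mul_MWsym_of_pos (hsq : ∀ a : F, 0 ≤ a → ∃ b : F, b ^ 2 = a) {u : Fˣ}
    (hu : 0 < (u : F)) : MWsym F (-1) * MWsym F u = 0 := by
  obtain ⟨b, hb, rfl⟩ := exists_pos_mul_self_eq hsq hu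
  obtain ⟨c, -, rfl⟩ := exists_pos_mul_self_eq hsq hb
  exact MWsym_neg_one_mul_MWsym_fourth_power c

theorem MWsym_neg_one_mul_MWsym_of_neg (hsq : ∀ a : F, 0 ≤ a → ∃ b : F, b ^ 2 = a) {u : Fˣ}
    (hu : (u : F) < 0) : MWsym F (-1) * MWsym F u = MWsym F (-1) * MWsym F (-1) := by
  simpa using MWsym_neg_one_mul_MWsym_neg_of_mul_eq_zero
    (MWsym_neg_one_mul_MWsym_of_pos hsq (u := -u) (by simpa using hu))

theorem map_MWsym_of_map_MWsym_neg_one (hsq : ∀ a : F, 0 ≤ a → ∃ b : F, b ^ 2 = a)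
    {S : Type} [Ring S] (g : MW F →+* S) {a : Sˣ} (ha : g (MWsym F (-1)) = a) (u : Fˣ) :
    g (MWsym F u) = if 0 < (u : F) then 0 else ↑a := by
  refine a.isUnit.mul_left_cancel ?_
  rw [← ha, ← map_mul]
  split_ifs with hu
  · rw [MWsym_neg_one_mul_MWsym_of_pos hsq hu, map_zero, mul_zero]
  · rw [MWsym_neg_one_mul_MWsym_of_neg hsq (lt_of_le_of_ne (not_lt.mp hu) u.ne_zero), map_mul]

end Ordered

namespace LaurentPolynomial

variable {S : Type} [Ring S]

noncomputable def evalUnit (a : Sˣ) : ℤ[T;T⁻¹] →+* S :=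
  AddMonoidAlgebra.liftNCRingHom (Int.castRingHom S) ((Units.coeHom S).comp (zpowersHom Sˣ a))
    fun n _ ↦ Int.cast_commute n _

@[simp]
theorem evalUnit_T (a : Sˣ) (n : ℤ) : evalUnit a (T n) = ↑(a ^ n) := by
  rw [evalUnit, T, AddMonoidAlgebra.liftNCRingHom_single]
  simp

theorem T_one_mul_T_neg_one {R : Type} [Semiring R] : (T 1 : R[T;T⁻¹]) * T (-1) = 1 := by
  rw [← T_add, add_neg_cancel, T_zero]

theorem intRingHom_ext {f g : ℤ[T;T⁻¹] →+* S} (h : f (T 1) = g (T 1)) : f = g :=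
  AddMonoidAlgebra.ringHom_ext' (RingHom.ext_int _ _) (MonoidHom.ext_mint h)

end LaurentPolynomial

section Signature

variable {F : Type} [Field F] [LinearOrder F] [IsStrictOrderedRing F]

noncomputable def signSym (u : Fˣ) : ℤ[T;T⁻¹] := if 0 < (u : F) then 0 else T 1

theorem signSym_mul (u v : Fˣ) :
    signSym (u * v) = signSym u + signSym v + -2 * T (-1) * signSym u * signSym v := by
  simp only [signSym, Units.val_mul]
  rcases lt_or_gt_of_ne u.ne_zero with hu | hu <;> rcases lt_or_gt_of_ne v.ne_zero with hv | hv
  · simp only [mul_pos_of_neg_of_neg hu hv, hu.not_gt, hv.not_gt, if_true, if_false]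
    linear_combination (2 * T 1 : ℤ[T;T⁻¹]) * T_one_mul_T_neg_one (R := ℤ)
  · simp [(mul_neg_of_neg_of_pos hu hv).not_gt, hu.not_gt, hv]
  · simp [(mul_neg_of_pos_of_neg hu hv).not_gt, hu, hv.not_gt]
  · simp [mul_pos hu hv, hu, hv]

theorem signSym_mul_signSym_of_add_eq_one {u v : Fˣ} (h : (u : F) + v = 1) :
    signSym u * signSym v = 0 := by
  rcases lt_or_gt_of_ne u.ne_zero with hu | hu
  · simp [signSym, show (0 : F) < v by linarith]
  · simp [signSym, hu]

theorem hyperbolic_signSym_mul :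
    (2 + signSym (-1 : Fˣ) * (-2 * T (-1))) * (-2 * T (-1)) = 0 := by
  simp only [signSym, Units.val_neg, Units.val_one, Left.neg_pos_iff, not_lt.mpr zero_le_one,
    if_false]
  linear_combination (4 * T (-1) : ℤ[T;T⁻¹]) * T_one_mul_T_neg_one (R := ℤ)

variable (F) in
noncomputable def MW.signature : MW F →+* ℤ[T;T⁻¹] :=
  MW.lift signSym (-2 * T (-1)) signSym_mul (fun _ _ ↦ signSym_mul_signSym_of_add_eq_one)
    (fun _ ↦ Commute.all _ _) hyperbolic_signSym_mul

theorem MW.signature_MWsym_neg_one : MW.signature F (MWsym F (-1)) = T 1 := by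
  simp [MW.signature, signSym]

end Signature

theorem mw_localize_neg_one_realClosed_general (F : Type) [Field F] [LinearOrder F] [IsStrictOrderedRing F]
    (hsq : ∀ a : F, 0 ≤ a → ∃ b : F, b ^ 2 = a) :
    ∃ f : MW F →+* LaurentPolynomial ℤ,
      f (MWsym F (-1)) = LaurentPolynomial.T 1 ∧
      f (MWeta F) = -2 * LaurentPolynomial.T (-1) ∧
      ∀ (S : Type) [Ring S] (g : MW F →+* S), IsUnit (g (MWsym F (-1))) →
        ∃! h : LaurentPolynomial ℤ →+* S, h.comp f = g := by
  refine ⟨MW.signature F, MW.signature_MWsym_neg_one, MW.lift_MWeta, fun S _ g hg ↦ ?_⟩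
  obtain ⟨a, ha⟩ := hg
  refine ⟨evalUnit a, MW.ringHom_ext (fun u ↦ ?_) ?_, fun h hh ↦ intRingHom_ext ?_⟩
  · rw [RingHom.comp_apply, map_MWsym_of_map_MWsym_neg_one hsq g ha.symm]
    by_cases hu : 0 < (u : F) <;> simp [MW.signature, signSym, hu]
  · simp [MW.signature, map_MWeta_of_map_MWsym_neg_one g ha.symm, map_ofNat]
  · rw [evalUnit_T, zpow_one, ha, ← hh, RingHom.comp_apply, MW.signature_MWsym_neg_one]

/-- for a real closed field `F` (a linear ordered field in which every
nonnegative element is a square and every odd-degree polynomial has a root),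
localizing Milnor–Witt K-theory at `[-1]` gives the Laurent polynomial ring
`ℤ[[-1], [-1]⁻¹]` on the degree-1 variable `[-1]`: there is a map
`f : K^{MW}_*(F) → ℤ[t,t⁻¹]` sending `[-1]` to `t` (and `η` to `-2t⁻¹`) which is
universal among ring maps inverting `[-1]`. -/
theorem mw_localize_neg_one_realClosed (F : Type) [Field F] [LinearOrder F] [IsStrictOrderedRing F]
    (hsq : ∀ a : F, 0 ≤ a → ∃ b : F, b ^ 2 = a)
    (hodd : ∀ p : Polynomial F, Odd p.natDegree → ∃ x : F, p.IsRoot x) :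
    ∃ f : MW F →+* LaurentPolynomial ℤ,
      f (MWsym F (-1)) = LaurentPolynomial.T 1 ∧
      f (MWeta F) = -2 * LaurentPolynomial.T (-1) ∧
      ∀ (S : Type) [Ring S] (g : MW F →+* S), IsUnit (g (MWsym F (-1))) →
        ∃! h : LaurentPolynomial ℤ →+* S, h.comp f = g :=
  mw_localize_neg_one_realClosed_general F hsq
end

section
/- Let C be a tensor triangulated category with coproducts, K a field object of C (every K-module is free), and M a K-module. If every P ⊗ K appearing in a free decomposition has P invertible, then K ⊗ X ⊗ Y ≅ 0 together with K ⊗ X ≅ ⊕_{i ∈ I} P_i ⊗ K implies ⊕_{i∈I} P_i ⊗ (K ⊗ Y) ≅ 0, and hence either I = ∅ or K ⊗ Y ≅ 0. -/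
open CategoryTheory CategoryTheory.Limits CategoryTheory.MonoidalCategory

universe v u

/-- An initial object is zero as soon as some zero object exists. -/
lemma isZero_of_isInitial_of_isZero {C : Type u} [Category.{v} C] {W Z : C}
    (hZ : IsZero Z) (hW : IsInitial W) : IsZero W :=
  hZ.of_iso (hW.uniqueUpToIso hZ.isInitial)

/-- Tensoring a zero object on the right with anything is initial, in a closed category. -/
noncomputable def isInitialTensorOfIsZero {C : Type u} [Category.{v} C] [MonoidalCategory C]
    [MonoidalClosed C] (Q : C) {W : C} (hW : IsZero W) : IsInitial (Q ⊗ W) :=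
  IsInitial.ofUniqueHom
    (fun B => ((ihom.adjunction Q).homEquiv W B).symm (hW.to_ _))
    (fun B m => by
      apply ((ihom.adjunction Q).homEquiv W B).injective
      exact hW.eq_of_src _ _)

/-- in a symmetric monoidal (closed) category with coproducts, if
`K ⊗ X ≅ ⊕_{i∈I} Pᵢ ⊗ K` with each `Pᵢ` invertible and `K ⊗ X ⊗ Y ≅ 0`, then
`⊕_{i∈I} Pᵢ ⊗ (K ⊗ Y) ≅ 0`, and hence either `I = ∅` or `K ⊗ Y ≅ 0`. -/
theorem free_module_tensor_zero
    (C : Type u) [Category.{v} C] [MonoidalCategory C] [SymmetricCategory C]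
    [HasCoproducts.{v} C] [MonoidalClosed C]
    (K X Y : C) (I : Type v) (P : I → C)
    (hPinv : ∀ i, ∃ Q : C, Nonempty (P i ⊗ Q ≅ 𝟙_ C))
    (hfree : Nonempty (K ⊗ X ≅ ∐ fun i => P i ⊗ K))
    (hzero : IsZero ((K ⊗ X) ⊗ Y)) :
    IsZero (∐ fun i => P i ⊗ (K ⊗ Y)) ∧ (IsEmpty I ∨ IsZero (K ⊗ Y)) := by
  obtain ⟨e⟩ := hfree
  -- summandwise iso : P i ⊗ (K ⊗ Y) ≅ Y ⊗ (P i ⊗ K)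
  have e1 : (∐ fun i => P i ⊗ (K ⊗ Y)) ≅ ∐ fun i => (tensorLeft Y).obj (P i ⊗ K) :=
    Sigma.mapIso (fun i => (α_ (P i) K Y).symm ≪≫ β_ (P i ⊗ K) Y)
  have e2 : (∐ fun i => (tensorLeft Y).obj (P i ⊗ K)) ≅ (tensorLeft Y).obj (∐ fun i => P i ⊗ K) :=
    (PreservesCoproduct.iso (tensorLeft Y) fun i => P i ⊗ K).symm
  have e3 : Y ⊗ (∐ fun i => P i ⊗ K) ≅ (K ⊗ X) ⊗ Y :=
    (whiskerLeftIso Y e.symm) ≪≫ β_ Y (K ⊗ X)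
  have hS : IsZero (∐ fun i => P i ⊗ (K ⊗ Y)) :=
    hzero.of_iso (e1 ≪≫ e2 ≪≫ e3)
  refine ⟨hS, ?_⟩
  rcases isEmpty_or_nonempty I with hI | ⟨⟨i⟩⟩
  · exact Or.inl hI
  · right
    set Z := K ⊗ Y with hZ
    -- First show the summand `P i ⊗ Z` is initial.
    have hinit : IsInitial (P i ⊗ Z) := by
      classical
      refine IsInitial.ofUniqueHom (fun B => Sigma.ι (fun j => P j ⊗ Z) i ≫ hS.to_ B) ?_
      intro B m
      let d : ∀ (f : P i ⊗ Z ⟶ B), (∐ fun j => P j ⊗ Z) ⟶ B := fun f =>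
        Sigma.desc (fun j => if h : j = i then eqToHom (show P j ⊗ Z = P i ⊗ Z by rw [h]) ≫ f
          else Sigma.ι (fun j => P j ⊗ Z) j ≫ hS.to_ B)
      have hm : m = Sigma.ι (fun j => P j ⊗ Z) i ≫ d m := by
        simp [d]
      rw [hm, hS.eq_of_src (d m) (hS.to_ B)]
    have hPZ : IsZero (P i ⊗ Z) := isZero_of_isInitial_of_isZero hS hinit
    obtain ⟨Q, ⟨hQ⟩⟩ := hPinv i
    -- Z ≅ Q ⊗ (P i ⊗ Z)
    have eZ : Z ≅ Q ⊗ (P i ⊗ Z) :=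
      (λ_ Z).symm ≪≫ whiskerRightIso ((β_ Q (P i)) ≪≫ hQ).symm Z ≪≫ α_ Q (P i) Z
    have hQPZ : IsZero (Q ⊗ (P i ⊗ Z)) :=
      isZero_of_isInitial_of_isZero hS (isInitialTensorOfIsZero Q hPZ)
    exact hQPZ.of_iso eZ
end
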